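/- Suppose σ = [p₀,…,p_k] and σ̃ = [p̃₀,…,p̃_k] are k-simplices in ℝ^m with |‖pᵢ − pⱼ‖ − ‖p̃ᵢ − p̃ⱼ‖| ≤ ξ₀·L(σ) for all i < j, where ξ₀ ≤ 2/3. Then there exists a rigid motion (isometry) Φ of ℝ^m such that, with p̂ᵢ = Φ(pᵢ), we have p̂₀ = p̃₀ and ‖p̂ᵢ − p̃ᵢ‖ ≤ 4√k·ξ₀·L(σ)/t(σ)² for all 1 ≤ i ≤ k. -/

import Mathlib

open Matrix Metric
open scoped Classical BigOperators

noncomputable section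

/-- Euclidean space ℝ^m. -/
abbrev E (m : ℕ) := EuclideanSpace ℝ (Fin m)

/-- Euclidean norm of a plain vector. -/
noncomputable def euclNorm {n : ℕ} (v : Fin n → ℝ) : ℝ := Real.sqrt (∑ i, v i ^ 2)

/-- Largest singular value (operator norm) of a matrix. -/
noncomputable def largeSV {m k : ℕ} (P : Matrix (Fin m) (Fin k) ℝ) : ℝ :=
  ⨆ x : {x : Fin k → ℝ // euclNorm x = 1}, euclNorm (P.mulVec x)

/-- Smallest singular value of a matrix. -/
noncomputable def smallSV {m k : ℕ} (P : Matrix (Fin m) (Fin k) ℝ) : ℝ :=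
  ⨅ x : {x : Fin k → ℝ // euclNorm x = 1}, euclNorm (P.mulVec x)

/-- Matrix of edge vectors pᵢ − p₀ of a k-simplex. -/
noncomputable def vertMatrix {m k : ℕ} (p : Fin (k+1) → E m) : Matrix (Fin m) (Fin k) ℝ :=
  fun a j => p j.succ a - p 0 a

/-- Pseudo-inverse (PᵀP)⁻¹Pᵀ of a matrix of full column rank. -/
noncomputable def pseudoInv {m k : ℕ} (P : Matrix (Fin m) (Fin k) ℝ) :
    Matrix (Fin k) (Fin m) ℝ := (Pᵀ * P)⁻¹ * Pᵀ

/-- Longest edge length of a simplex given by its vertices. -/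
noncomputable def longEdge {m k : ℕ} (p : Fin (k+1) → E m) : ℝ :=
  ⨆ i, ⨆ j, dist (p i) (p j)

/-- Altitude of vertex i: distance to affine hull of the opposite facet. -/
noncomputable def altitude {m k : ℕ} (p : Fin (k+1) → E m) (i : Fin (k+1)) : ℝ :=
  Metric.infDist (p i) (↑(affineSpan ℝ (p '' {j | j ≠ i})) : Set (E m))

/-- Thickness of a k-simplex: 1 if k = 0, else min altitude / (k · longest edge). -/
noncomputable def thickness {m k : ℕ} (p : Fin (k+1) → E m) : ℝ :=
  if k = 0 then 1 else (⨅ i, altitude p i) / (k * longEdge p)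

/-- Longest edge of a finite vertex set. -/
noncomputable def fLongEdge {m : ℕ} (s : Finset (E m)) : ℝ := Metric.diam (s : Set (E m))

/-- Minimal altitude of a finite vertex set. -/
noncomputable def fMinAlt {m : ℕ} (s : Finset (E m)) : ℝ :=
  ⨅ p : {p // p ∈ s},
    Metric.infDist (p : E m) (↑(affineSpan ℝ ((s.erase (p : E m)) : Set (E m))) : Set (E m))

/-- Thickness of a simplex given as a finite vertex set. -/
noncomputable def fThickness {m : ℕ} (s : Finset (E m)) : ℝ :=
  if s.card ≤ 1 then 1 else fMinAlt s / ((s.card - 1 : ℕ) * fLongEdge s)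

/-- A simplex (finite vertex set) is Γ₀-good if every j-face has thickness ≥ Γ₀^j. -/
def isGood {m : ℕ} (Γ₀ : ℝ) (s : Finset (E m)) : Prop :=
  ∀ t ⊆ s, t.Nonempty → fThickness t ≥ Γ₀ ^ (t.card - 1)

/-- A Γ₀-flake: not Γ₀-good, but every facet is Γ₀-good. -/
def isFlake {m : ℕ} (Γ₀ : ℝ) (s : Finset (E m)) : Prop :=
  ¬ isGood Γ₀ s ∧ ∀ p ∈ s, isGood Γ₀ (s.erase p)

/-!
Move `p₀` and `q₀` to the origin and compare the edge vectors `uᵢ = pᵢ - p₀` and `vᵢ = qᵢ - q₀`.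
Each Gram entry `⟪uᵢ, uⱼ⟫` is half a signed sum of three squared edge lengths, so the two Gram
matrices differ entrywise by at most `4 ξ₀ L²` once `ξ₀ ≤ 2/3`. The altitudes bound the smallest
singular value of `(u₁ … u_k)` below by `√k t L`, hence the linear map `T : uᵢ ↦ vᵢ` on the span of
the `uᵢ` satisfies `|‖T x‖² - ‖x‖²| ≤ δ ‖x‖²` with `δ = 4 ξ₀ / t²`. In an eigenbasis of `T* T` the
map `T` is an orthogonal family of stretches by factors `cᵢ` with `|cᵢ - 1| ≤ |cᵢ² - 1| ≤ δ`, so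
it is `δ`-close to a linear isometry, which extends to all of `ℝ^m`.
-/

open RealInnerProductSpace Module InnerProductSpace

lemma abs_sub_one_le_abs_sq_sub_one {c : ℝ} (hc : 0 ≤ c) : |c - 1| ≤ |c ^ 2 - 1| := by
  have h : |c ^ 2 - 1| = |c - 1| * (c + 1) := by
    rw [← abs_of_nonneg (by linarith : (0:ℝ) ≤ c + 1), ← abs_mul]
    ring_nf
  rw [h]
  nlinarith [abs_nonneg (c - 1)]

lemma Orthonormal.norm_sum_smul_sq {F ι : Type*} [NormedAddCommGroup F] [InnerProductSpace ℝ F]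
    [Fintype ι] {f : ι → F} (hf : Orthonormal ℝ f) (b : ι → ℝ) :
    ‖∑ i, b i • f i‖ ^ 2 = ∑ i, b i ^ 2 := by
  rw [← real_inner_self_eq_norm_sq, hf.inner_sum]
  simp [sq]

lemma exists_orthonormal_smul_eq_of_pairwise_inner_eq_zero {F ι : Type*} [NormedAddCommGroup F]
    [InnerProductSpace ℝ F] [FiniteDimensional ℝ F] [Fintype ι]
    (hcard : Fintype.card ι ≤ finrank ℝ F) (w : ι → F)
    (hw : Pairwise fun i j => ⟪w i, w j⟫ = 0) :
    ∃ f : ι → F, Orthonormal ℝ f ∧ ∀ i, w i = ‖w i‖ • f i := by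
  obtain ⟨emb⟩ : Nonempty (ι ↪ Fin (finrank ℝ F)) :=
    Function.Embedding.nonempty_of_card_le (by simpa using hcard)
  set w' : Fin (finrank ℝ F) → F := Function.extend emb w 0
  have hw'_apply : ∀ i, w' (emb i) = w i := emb.injective.extend_apply w 0
  have hw' : Pairwise fun a b => ⟪w' a, w' b⟫ = 0 := by
    intro a b hab
    by_cases ha : ∃ i, emb i = a
    · by_cases hb : ∃ j, emb j = b
      · obtain ⟨i, rfl⟩ := ha
        obtain ⟨j, rfl⟩ := hb
        rw [hw'_apply, hw'_apply]
        exact hw (ne_of_apply_ne emb hab)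
      · simp [w', Function.extend_apply' _ _ _ hb]
    · simp [w', Function.extend_apply' _ _ _ ha]
  set b := gramSchmidtOrthonormalBasis (𝕜 := ℝ) (by simp) w'
  refine ⟨b ∘ emb, b.orthonormal.comp _ emb.injective, fun i => ?_⟩
  by_cases hi : w i = 0
  · simp [hi]
  · have hb : b (emb i) = ‖w i‖⁻¹ • w i := by
      rw [gramSchmidtOrthonormalBasis_apply_of_orthogonal _ hw' (by rwa [hw'_apply]),
        hw'_apply]
      simp
    rw [Function.comp_apply, hb, smul_smul, mul_inv_cancel₀ (norm_ne_zero_iff.2 hi), one_smul]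

lemma exists_linearIsometry_near {V W : Type*} [NormedAddCommGroup V] [InnerProductSpace ℝ V]
    [FiniteDimensional ℝ V] [NormedAddCommGroup W] [InnerProductSpace ℝ W]
    [FiniteDimensional ℝ W] (hdim : finrank ℝ V ≤ finrank ℝ W) (T : V →ₗ[ℝ] W) {δ : ℝ}
    (hδ : 0 ≤ δ) (hT : ∀ x, |‖T x‖ ^ 2 - ‖x‖ ^ 2| ≤ δ * ‖x‖ ^ 2) :
    ∃ U : V →ₗᵢ[ℝ] W, ∀ x, ‖U x - T x‖ ≤ δ * ‖x‖ := by
  have hG := (LinearMap.isPositive_adjoint_comp_self T).isSymmetric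
  set e := hG.eigenvectorBasis rfl
  have hTe : Pairwise fun i j => ⟪T (e i), T (e j)⟫ = 0 := by
    intro i j hij
    rw [← LinearMap.adjoint_inner_right, ← LinearMap.comp_apply, hG.apply_eigenvectorBasis,
      real_inner_smul_right, e.orthonormal.2 hij, mul_zero]
  obtain ⟨f, hf, hTf⟩ := exists_orthonormal_smul_eq_of_pairwise_inner_eq_zero
    (by simpa using hdim) (fun i => T (e i)) hTe
  set c := fun i => ‖T (e i)‖
  have hc : ∀ i, |1 - c i| ≤ δ := fun i => by
    have h := hT (e i)
    rw [e.orthonormal.1 i, one_pow, mul_one] at h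
    rw [abs_sub_comm]
    exact (abs_sub_one_le_abs_sq_sub_one (norm_nonneg _)).trans h
  have he : Orthonormal ℝ e.toBasis := by simp
  have hf' : Orthonormal ℝ (e.toBasis.constr ℝ f ∘ e.toBasis) := by
    simpa [Function.comp_def] using hf
  set U := (e.toBasis.constr ℝ f).isometryOfOrthonormal he hf'
  have hUe : ∀ i, U (e i) = f i := fun i => by
    simp [U]
  refine ⟨U, fun x => ?_⟩
  set a := e.repr x
  have hdiff : U x - T x = ∑ i, (a i * (1 - c i)) • f i := by
    conv_lhs => rw [← e.sum_repr x]
    simp only [map_sum, map_smul, hUe, ← Finset.sum_sub_distrib]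
    refine Finset.sum_congr rfl fun i _ => ?_
    rw [show T (e i) = c i • f i from hTf i]
    module
  have hsq : ‖U x - T x‖ ^ 2 ≤ (δ * ‖x‖) ^ 2 := by
    rw [hdiff, hf.norm_sum_smul_sq, mul_pow, ← e.sum_repr x,
      e.orthonormal.norm_sum_smul_sq, Finset.mul_sum]
    refine Finset.sum_le_sum fun i _ => ?_
    rw [mul_pow, mul_comm (δ ^ 2)]
    exact mul_le_mul_of_nonneg_left (sq_le_sq' (abs_le.1 (hc i)).1 (abs_le.1 (hc i)).2)
      (sq_nonneg _)
  exact (pow_le_pow_iff_left₀ (norm_nonneg _) (by positivity) two_ne_zero).1 hsq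

lemma abs_norm_sq_sum_smul_sub_le {V ι : Type*} [NormedAddCommGroup V] [InnerProductSpace ℝ V]
    [Fintype ι] (u v : ι → V) {ε : ℝ} (hε : 0 ≤ ε)
    (huv : ∀ i j, |⟪u i, u j⟫ - ⟪v i, v j⟫| ≤ ε) (c : ι → ℝ) :
    |‖∑ i, c i • v i‖ ^ 2 - ‖∑ i, c i • u i‖ ^ 2| ≤ ε * (Fintype.card ι * ∑ i, c i ^ 2) := by
  have hexp : ‖∑ i, c i • v i‖ ^ 2 - ‖∑ i, c i • u i‖ ^ 2
      = ∑ i, ∑ j, c i * c j * (⟪v i, v j⟫ - ⟪u i, u j⟫) := by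
    simp only [← real_inner_self_eq_norm_sq, sum_inner, inner_sum, real_inner_smul_left,
      real_inner_smul_right, ← Finset.sum_sub_distrib]
    refine Finset.sum_congr rfl fun i _ => Finset.sum_congr rfl fun j _ => ?_
    rw [real_inner_comm (v i), real_inner_comm (u i)]
    ring
  calc |‖∑ i, c i • v i‖ ^ 2 - ‖∑ i, c i • u i‖ ^ 2|
      ≤ ∑ i, ∑ j, |c i| * |c j| * ε := by
        rw [hexp]
        refine (Finset.abs_sum_le_sum_abs _ _).trans (Finset.sum_le_sum fun i _ =>
          (Finset.abs_sum_le_sum_abs _ _).trans (Finset.sum_le_sum fun j _ => ?_))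
        rw [abs_mul, abs_mul, abs_sub_comm]
        gcongr
        exact huv i j
    _ = ε * (∑ i, |c i|) ^ 2 := by
        rw [sq, Finset.sum_mul_sum, Finset.mul_sum]
        refine Finset.sum_congr rfl fun i _ => ?_
        rw [Finset.mul_sum]
        refine Finset.sum_congr rfl fun j _ => ?_
        ring
    _ ≤ ε * (Fintype.card ι * ∑ i, c i ^ 2) := by
        gcongr
        simpa [sq_abs] using sq_sum_le_card_mul_sum_sq (s := Finset.univ) (f := fun i => |c i|)

lemma abs_mul_infDist_span_le_norm_sum_smul {V ι : Type*} [NormedAddCommGroup V]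
    [NormedSpace ℝ V] [Fintype ι] (u : ι → V) (c : ι → ℝ) (i : ι) :
    |c i| * infDist (u i) (Submodule.span ℝ (u '' {j | j ≠ i})) ≤ ‖∑ j, c j • u j‖ := by
  classical
  by_cases hc : c i = 0
  · simp [hc]
  set w := ∑ j ∈ Finset.univ.erase i, c j • u j
  have hw : -((c i)⁻¹ • w) ∈ Submodule.span ℝ (u '' {j | j ≠ i}) :=
    Submodule.neg_mem _ <| Submodule.smul_mem _ _ <| Submodule.sum_mem _ fun j hj =>
      Submodule.smul_mem _ _ <| Submodule.subset_span ⟨j, Finset.ne_of_mem_erase hj, rfl⟩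
  have hsum : ∑ j, c j • u j = c i • (u i - -((c i)⁻¹ • w)) := by
    rw [← Finset.add_sum_erase _ _ (Finset.mem_univ i), sub_neg_eq_add, smul_add, smul_smul,
      mul_inv_cancel₀ hc, one_smul]
  rw [hsum, norm_smul, Real.norm_eq_abs, ← dist_eq_norm]
  exact mul_le_mul_of_nonneg_left (infDist_le_dist_of_mem hw) (abs_nonneg _)

lemma sq_mul_sum_sq_le_card_mul_norm_sq {V ι : Type*} [NormedAddCommGroup V]
    [NormedSpace ℝ V] [Fintype ι] (u : ι → V) {h : ℝ} (hh : 0 ≤ h)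
    (hu : ∀ i, h ≤ infDist (u i) (Submodule.span ℝ (u '' {j | j ≠ i}))) (c : ι → ℝ) :
    h ^ 2 * ∑ i, c i ^ 2 ≤ Fintype.card ι * ‖∑ i, c i • u i‖ ^ 2 := by
  have hcard : (Fintype.card ι : ℝ) * ‖∑ i, c i • u i‖ ^ 2 = ∑ _i : ι, ‖∑ i, c i • u i‖ ^ 2 := by
    simp
  rw [hcard, Finset.mul_sum]
  refine Finset.sum_le_sum fun i _ => ?_
  rw [← sq_abs (c i), ← mul_pow, mul_comm]
  gcongr
  exact (mul_le_mul_of_nonneg_left (hu i) (abs_nonneg _)).trans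
    (abs_mul_infDist_span_le_norm_sum_smul u c i)

theorem exists_linearIsometryEquiv_near_of_gram {V ι : Type*} [NormedAddCommGroup V]
    [InnerProductSpace ℝ V] [FiniteDimensional ℝ V] [Fintype ι] (u v : ι → V) {s ε : ℝ}
    (hs : 0 < s) (hε : 0 ≤ ε) (hu : ∀ c : ι → ℝ, s ^ 2 * ∑ i, c i ^ 2 ≤ ‖∑ i, c i • u i‖ ^ 2)
    (huv : ∀ i j, |⟪u i, u j⟫ - ⟪v i, v j⟫| ≤ ε) :
    ∃ Φ : V ≃ₗᵢ[ℝ] V, ∀ i, ‖Φ (u i) - v i‖ ≤ ε * Fintype.card ι / s ^ 2 * ‖u i‖ := by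
  have hind : LinearIndependent ℝ u := by
    refine Fintype.linearIndependent_iff.2 fun c hc i => ?_
    have hc2 : ∀ j ∈ Finset.univ, 0 ≤ c j ^ 2 := fun j _ => sq_nonneg (c j)
    have h0 : ∑ j, c j ^ 2 = 0 := by
      have := hu c
      rw [hc, norm_zero] at this
      nlinarith [pow_pos hs 2, Finset.sum_nonneg hc2]
    exact pow_eq_zero_iff two_ne_zero |>.1 <|
      (Finset.sum_eq_zero_iff_of_nonneg hc2).1 h0 i (Finset.mem_univ i)
  set B := Module.Basis.span hind
  have hB : ∀ i, (B i : V) = u i := fun i => congrArg Subtype.val (Module.Basis.span_apply hind i)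
  set T := B.constr ℝ v
  set δ := ε * Fintype.card ι / s ^ 2
  have hT : ∀ x, |‖T x‖ ^ 2 - ‖x‖ ^ 2| ≤ δ * ‖x‖ ^ 2 := by
    intro x
    obtain ⟨c, rfl⟩ : ∃ c : ι → ℝ, ∑ i, c i • B i = x := ⟨B.repr x, B.sum_repr x⟩
    have hx : ((∑ i, c i • B i : Submodule.span ℝ (Set.range u)) : V) = ∑ i, c i • u i := by
      simp [hB]
    have hTx : T (∑ i, c i • B i) = ∑ i, c i • v i := by
      simp [T]
    rw [Submodule.coe_norm, hx, hTx]
    calc _ ≤ ε * (Fintype.card ι * ∑ i, c i ^ 2) := abs_norm_sq_sum_smul_sub_le u v hε huv c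
      _ = δ * (s ^ 2 * ∑ i, c i ^ 2) := by simp only [δ]; field_simp
      _ ≤ δ * ‖∑ i, c i • u i‖ ^ 2 := by gcongr; exact hu c
  obtain ⟨U, hU⟩ := exists_linearIsometry_near (Submodule.finrank_le _) T (by positivity) hT
  refine ⟨U.extend.toLinearIsometryEquiv rfl, fun i => ?_⟩
  have hTB : T (B i) = v i := B.constr_basis ℝ v i
  rw [← hB i, LinearIsometry.coe_toLinearIsometryEquiv, LinearIsometry.extend_apply, ← hTB,
    ← Submodule.coe_norm]
  exact hU (B i)

lemma infDist_affineSpan_eq_infDist_vectorSpan {V : Type*} [NormedAddCommGroup V]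
    [NormedSpace ℝ V] {s : Set V} {p₀ : V} (hp₀ : p₀ ∈ s) (x : V) :
    infDist x (affineSpan ℝ s) = infDist (x - p₀) (vectorSpan ℝ s) := by
  have himage : (IsometryEquiv.subRight p₀) '' (affineSpan ℝ s : Set V) = vectorSpan ℝ s := by
    ext y
    rw [← direction_affineSpan, ← IsometryEquiv.preimage_symm, Set.mem_preimage,
      SetLike.mem_coe, ← AffineSubspace.vsub_right_mem_direction_iff_mem
        (mem_affineSpan ℝ hp₀)]
    simp
  rw [← himage, show x - p₀ = IsometryEquiv.subRight p₀ x from rfl,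
    infDist_image (IsometryEquiv.subRight p₀).isometry]

lemma inner_sub_sub_eq_dist_sq {V : Type*} [NormedAddCommGroup V] [InnerProductSpace ℝ V]
    (a b o : V) : ⟪a - o, b - o⟫ = (dist a o ^ 2 + dist b o ^ 2 - dist a b ^ 2) / 2 := by
  have h := norm_sub_sq_real (a - o) (b - o)
  rw [sub_sub_sub_cancel_right] at h
  rw [dist_eq_norm, dist_eq_norm, dist_eq_norm, h]
  ring

lemma abs_sq_sub_sq_le {a b ε L : ℝ} (ha : 0 ≤ a) (hb : 0 ≤ b) (hab : |a - b| ≤ ε)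
    (haL : a ≤ L) : |a ^ 2 - b ^ 2| ≤ ε * (2 * L + ε) := by
  rw [sq_sub_sq, abs_mul, abs_of_nonneg (add_nonneg ha hb), mul_comm]
  have := (abs_le.1 hab).1
  exact mul_le_mul hab (by linarith) (by positivity) ((abs_nonneg _).trans hab)

section Simplex

variable {m k : ℕ}

def edgeVec (p : Fin (k+1) → E m) (i : Fin k) : E m := p i.succ - p 0

lemma dist_le_longEdge (p : Fin (k+1) → E m) (a b : Fin (k+1)) :
    dist (p a) (p b) ≤ longEdge p :=
  (le_ciSup (Set.finite_range _).bddAbove b).trans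
    (le_ciSup (f := fun i => ⨆ j, dist (p i) (p j)) (Set.finite_range _).bddAbove a)

lemma longEdge_nonneg (p : Fin (k+1) → E m) : 0 ≤ longEdge p :=
  dist_nonneg.trans (dist_le_longEdge p 0 0)

lemma thickness_nonneg (p : Fin (k+1) → E m) : 0 ≤ thickness p := by
  unfold thickness
  split_ifs
  · exact zero_le_one
  · exact div_nonneg (Real.iInf_nonneg fun i => infDist_nonneg)
      (mul_nonneg k.cast_nonneg (longEdge_nonneg p))

lemma thickness_mul_le_altitude (p : Fin (k+1) → E m) (hk : k ≠ 0) (i : Fin (k+1)) :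
    thickness p * (k * longEdge p) ≤ altitude p i := by
  rw [thickness, if_neg hk]
  by_cases h : (k : ℝ) * longEdge p = 0
  · simp [h, altitude, infDist_nonneg]
  · rw [div_mul_cancel₀ _ h]
    exact ciInf_le (Set.finite_range _).bddBelow i

lemma longEdge_pos (p : Fin (k+1) → E m) (hk : k ≠ 0) (ht : 0 < thickness p) :
    0 < longEdge p := by
  refine (longEdge_nonneg p).lt_of_ne fun h => ht.ne' ?_
  rw [thickness, if_neg hk, ← h, mul_zero, div_zero]

lemma altitude_succ_eq_infDist (p : Fin (k+1) → E m) (i : Fin k) :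
    altitude p i.succ = infDist (edgeVec p i) (Submodule.span ℝ (edgeVec p '' {j | j ≠ i})) := by
  have hp₀ : p 0 ∈ p '' {j | j ≠ i.succ} := ⟨0, (Fin.succ_ne_zero i).symm, rfl⟩
  have hset : (· -ᵥ p 0) '' (p '' {j | j ≠ i.succ}) = insert 0 (edgeVec p '' {j | j ≠ i}) := by
    ext y
    simp [Fin.exists_fin_succ, edgeVec, eq_comm]
  rw [altitude, infDist_affineSpan_eq_infDist_vectorSpan hp₀,
    vectorSpan_eq_span_vsub_set_right ℝ hp₀, hset, Submodule.span_insert_zero]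
  rfl

lemma sq_mul_sum_sq_le_norm_sq_sum_edgeVec (p : Fin (k+1) → E m) (hk : k ≠ 0)
    (c : Fin k → ℝ) :
    (√k * thickness p * longEdge p) ^ 2 * ∑ i, c i ^ 2 ≤ ‖∑ i, c i • edgeVec p i‖ ^ 2 := by
  have hkpos : (0 : ℝ) < k := by positivity
  have h := sq_mul_sum_sq_le_card_mul_norm_sq (edgeVec p)
    (by have := thickness_nonneg p; have := longEdge_nonneg p; positivity)
    (fun i => (thickness_mul_le_altitude p hk i.succ).trans (altitude_succ_eq_infDist p i).le) c
  rw [Fintype.card_fin] at h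
  have hsq : (√k * thickness p * longEdge p) ^ 2 * k
      = (thickness p * (k * longEdge p)) ^ 2 := by
    rw [mul_pow, mul_pow, Real.sq_sqrt hkpos.le]
    ring
  rw [← hsq, mul_right_comm, mul_comm (k : ℝ)] at h
  exact le_of_mul_le_mul_right h hkpos

lemma abs_inner_edgeVec_sub_le (p q : Fin (k+1) → E m) {ξ₀ : ℝ} (hξ0 : 0 ≤ ξ₀)
    (hξ : ξ₀ ≤ 2/3) (hpq : ∀ a b, |dist (p a) (p b) - dist (q a) (q b)| ≤ ξ₀ * longEdge p)
    (i j : Fin k) :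
    |⟪edgeVec p i, edgeVec p j⟫ - ⟪edgeVec q i, edgeVec q j⟫| ≤ 4 * ξ₀ * longEdge p ^ 2 := by
  set L := longEdge p
  have hsq : ∀ a b, |dist (p a) (p b) ^ 2 - dist (q a) (q b) ^ 2| ≤ ξ₀ * (2 + ξ₀) * L ^ 2 :=
    fun a b => (abs_sq_sub_sq_le dist_nonneg dist_nonneg (hpq a b) (dist_le_longEdge p a b)).trans
      (le_of_eq (by ring))
  have h1 := abs_le.1 (hsq i.succ 0)
  have h2 := abs_le.1 (hsq j.succ 0)
  have h3 := abs_le.1 (hsq i.succ j.succ)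
  have hξL : 3 * (ξ₀ * (2 + ξ₀) * L ^ 2) ≤ 8 * ξ₀ * L ^ 2 := by
    nlinarith [mul_nonneg hξ0 (sq_nonneg L)]
  rw [edgeVec, edgeVec, edgeVec, edgeVec, inner_sub_sub_eq_dist_sq, inner_sub_sub_eq_dist_sq,
    abs_le]
  constructor <;> linarith

lemma exists_linearIsometryEquiv_edgeVec_near (p q : Fin (k+1) → E m) (hk : k ≠ 0)
    {ξ₀ : ℝ} (hξ0 : 0 ≤ ξ₀) (hξ : ξ₀ ≤ 2/3) (ht : 0 < thickness p)
    (hpq : ∀ a b, |dist (p a) (p b) - dist (q a) (q b)| ≤ ξ₀ * longEdge p) :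
    ∃ Φ : E m ≃ₗᵢ[ℝ] E m,
      ∀ i, ‖Φ (edgeVec p i) - edgeVec q i‖ ≤ 4 * ξ₀ / thickness p ^ 2 * longEdge p := by
  have hL := longEdge_pos p hk ht
  obtain ⟨Φ, hΦ⟩ := exists_linearIsometryEquiv_near_of_gram (edgeVec p) (edgeVec q)
    (by positivity) (by positivity) (sq_mul_sum_sq_le_norm_sq_sum_edgeVec p hk)
    (abs_inner_edgeVec_sub_le p q hξ0 hξ hpq)
  have hδ : 4 * ξ₀ * longEdge p ^ 2 * Fintype.card (Fin k) / (√k * thickness p * longEdge p) ^ 2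
      = 4 * ξ₀ / thickness p ^ 2 := by
    rw [Fintype.card_fin, mul_pow, mul_pow, Real.sq_sqrt (by positivity)]
    field_simp
  refine ⟨Φ, fun i => (hΦ i).trans ?_⟩
  rw [hδ, edgeVec, ← dist_eq_norm]
  gcongr
  exact dist_le_longEdge p _ _

end Simplex

/-- Close alignment of simplices by a rigid motion. -/
theorem stmt5 {m k : ℕ} (p q : Fin (k+1) → E m) (ξ₀ : ℝ)
    (hξ0 : 0 ≤ ξ₀) (hξ : ξ₀ ≤ 2/3) (hnd : 0 < thickness p)
    (h : ∀ i j : Fin (k+1), i < j →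
      |dist (p i) (p j) - dist (q i) (q j)| ≤ ξ₀ * longEdge p) :
    ∃ Φ : E m ≃ᵢ E m, Φ (p 0) = q 0 ∧
      ∀ i : Fin (k+1), i ≠ 0 →
        dist (Φ (p i)) (q i) ≤ 4 * Real.sqrt k * ξ₀ * longEdge p / thickness p ^ 2 := by
  rcases eq_or_ne k 0 with rfl | hk
  · exact ⟨IsometryEquiv.addRight (q 0 - p 0), by simp,
      fun i hi => (hi (Fin.fin_one_eq_zero i)).elim⟩
  have hpq : ∀ a b, |dist (p a) (p b) - dist (q a) (q b)| ≤ ξ₀ * longEdge p := by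
    intro a b
    rcases lt_trichotomy a b with hab | rfl | hab
    · exact h a b hab
    · simpa using mul_nonneg hξ0 (longEdge_nonneg p)
    · rw [dist_comm (p a), dist_comm (q a)]
      exact h b a hab
  obtain ⟨Φ, hΦ⟩ := exists_linearIsometryEquiv_edgeVec_near p q hk hξ0 hξ hnd hpq
  refine ⟨((IsometryEquiv.subRight (p 0)).trans Φ.toIsometryEquiv).trans
    (IsometryEquiv.addRight (q 0)), by simp, fun i hi => ?_⟩
  obtain ⟨j, rfl⟩ := Fin.exists_succ_eq.2 hi
  have hsqrt : 1 ≤ √(k : ℝ) := Real.one_le_sqrt.2 (by exact_mod_cast Nat.one_le_iff_ne_zero.2 hk)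
  calc dist _ (q j.succ) = ‖Φ (edgeVec p j) - edgeVec q j‖ := by
        simp only [IsometryEquiv.trans_apply, IsometryEquiv.subRight_apply,
          IsometryEquiv.addRight_apply, LinearIsometryEquiv.coe_toIsometryEquiv, dist_eq_norm,
          edgeVec]
        congr 1
        abel
    _ ≤ 4 * ξ₀ / thickness p ^ 2 * longEdge p := hΦ j
    _ ≤ 4 * √k * ξ₀ * longEdge p / thickness p ^ 2 := by
        rw [div_mul_eq_mul_div]
        have := longEdge_nonneg p
        gcongr
        nlinarith
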